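/- Let A be a commutative ring, f ∈ A, and e ≥ 1, l ≥ 1 integers. In S := A[X,Y,t]/( XY − f·t^e, t^{l+1} ) one has XY·t^l = 0, and the A[X,Y]-linear map A[X,Y] → S sending g to t^l·g (image of g) kills the ideal (XY) and induces an injective A[X,Y]/(XY)-module homomorphism A[X,Y]/(XY) → S whose image is exactly the ideal of S generated by t^l. In other words, the ideal (t^l) ⊆ S is a free A[X,Y]/(XY)-module of rank one with generator t^l. -/

import Mathlib

/-!
View `A[X,Y,t]` as `B[t]` with `B = A[X,Y]`, so that `u = XY − f·t^e` is a polynomial in `t`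
whose constant coefficient `XY` is a nonzerodivisor of `B`. Since `e ≥ 1`,
`XY·t^l = t^l·u + f·t^{e-1}·t^{l+1}` vanishes in `S`. Modulo `t` every polynomial is congruent
to one in `B`, so `t^l·P ≡ t^l·P(X,Y,0)` modulo `t^{l+1}`, and every multiple of `t^l` in `S`
comes from `B`. Finally, if `t^l·g = u·p + q·t^{l+1}`, then `t^l ∣ u·p`, and since the constant
coefficient of `u` is regular this forces `t^l ∣ p`; cancelling `t^l` and setting `t = 0`
yields `g = XY·p'(0)`.
-/

open MvPolynomial

/-- The ideal defining `S = A[X,Y,t]/(XY − f·t^e, t^{l+1})`, with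
`X = X 0`, `Y = X 1`, `t = X 2`. -/
noncomputable def stmt9I (A : Type*) [CommRing A] (f : A) (e l : ℕ) :
    Ideal (MvPolynomial (Fin 3) A) :=
  Ideal.span {X 0 * X 1 - C f * (X 2) ^ e, (X 2) ^ (l + 1)}

namespace Polynomial

variable {R : Type*} [CommRing R]

theorem X_pow_dvd_of_X_pow_dvd_mul_of_isLeftRegular {u p : R[X]}
    (hu : IsLeftRegular (u.coeff 0)) {n : ℕ} (h : X ^ n ∣ u * p) : X ^ n ∣ p := by
  induction n with
  | zero => exact one_dvd p
  | succ n ih =>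
    obtain ⟨p, rfl⟩ := ih (dvd_trans (pow_dvd_pow X n.le_succ) h)
    rw [pow_succ, mul_left_comm, (isRegular_X_pow n).left.dvd_cancel_left, X_dvd_iff,
      mul_coeff_zero] at h
    rw [pow_succ]
    exact mul_dvd_mul_left _ (X_dvd_iff.mpr (hu (h.trans (mul_zero _).symm)))

theorem mem_span_coeff_zero_of_X_pow_mul_C_mem_span_pair {u : R[X]}
    (hu : IsLeftRegular (u.coeff 0)) {g : R} {l : ℕ}
    (h : X ^ l * C g ∈ Ideal.span {u, X ^ (l + 1)}) : g ∈ Ideal.span {u.coeff 0} := by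
  obtain ⟨p, q, hpq⟩ := Ideal.mem_span_pair.mp h
  have hdvd : X ^ l ∣ u * p := ⟨C g - q * X, by linear_combination hpq⟩
  obtain ⟨p, rfl⟩ := X_pow_dvd_of_X_pow_dvd_mul_of_isLeftRegular hu hdvd
  have hg : C g = p * u + q * X := (isRegular_X_pow l).left (by linear_combination -hpq)
  refine Ideal.mem_span_singleton'.mpr ⟨p.coeff 0, ?_⟩
  simpa using congrArg (coeff · 0) hg.symm

end Polynomial

namespace MvPolynomial

variable {A : Type*} [CommRing A] {n : ℕ}

noncomputable def toPolynomialLastVar :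
    MvPolynomial (Fin (n + 1)) A →ₐ[A] Polynomial (MvPolynomial (Fin n) A) :=
  aeval (Fin.lastCases Polynomial.X fun i => Polynomial.C (X i))

@[simp]
theorem toPolynomialLastVar_X_last :
    toPolynomialLastVar (X (Fin.last n) : MvPolynomial _ A) = Polynomial.X := by
  simp [toPolynomialLastVar]

@[simp]
theorem toPolynomialLastVar_X_castSucc (i : Fin n) :
    toPolynomialLastVar (X i.castSucc : MvPolynomial _ A) = Polynomial.C (X i) := by
  simp [toPolynomialLastVar]

@[simp]
theorem toPolynomialLastVar_rename_castSucc (g : MvPolynomial (Fin n) A) :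
    toPolynomialLastVar (rename Fin.castSucc g) = Polynomial.C g := by
  induction g using MvPolynomial.induction_on with
  | C a => simp
  | add p q hp hq => simp [hp, hq]
  | mul_X p i hp => simp [hp]

theorem rename_castSucc_aeval_sub_mem_span_X_last (P : MvPolynomial (Fin (n + 1)) A) :
    rename Fin.castSucc (aeval (Fin.lastCases 0 X) P) - P ∈ Ideal.span {X (Fin.last n)} := by
  rw [← Ideal.Quotient.eq]
  suffices h : (Ideal.Quotient.mkₐ A _).comp
      ((rename Fin.castSucc).comp (aeval (Fin.lastCases 0 X))) =
      Ideal.Quotient.mkₐ A (Ideal.span {(X (Fin.last n) : MvPolynomial (Fin (n + 1)) A)}) from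
    AlgHom.congr_fun h P
  refine algHom_ext fun i => ?_
  induction i using Fin.lastCases <;> simp

end MvPolynomial

section stmt9I

variable {A : Type*} [CommRing A] {f : A} {e l : ℕ}

theorem X_zero_mul_X_one_mul_X_two_pow_mem_stmt9I (he : 1 ≤ e) :
    (X 0 * X 1 * X 2 ^ l : MvPolynomial (Fin 3) A) ∈ stmt9I A f e l := by
  obtain ⟨e, rfl⟩ := Nat.exists_eq_add_of_le' he
  exact Ideal.mem_span_pair.mpr ⟨X 2 ^ l, C f * X 2 ^ e, by ring⟩

theorem X_two_pow_mul_rename_mem_stmt9I_iff (he : 1 ≤ e) {g : MvPolynomial (Fin 2) A} :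
    X 2 ^ l * rename (Fin.castSucc : Fin 2 → Fin 3) g ∈ stmt9I A f e l ↔
      g ∈ Ideal.span {X 0 * X 1} := by
  constructor
  · intro h
    have hmap := Ideal.mem_map_of_mem toPolynomialLastVar h
    rw [stmt9I, Ideal.map_span, Set.image_pair, show (2 : Fin 3) = Fin.last 2 from rfl,
      show (0 : Fin 3) = Fin.castSucc 0 from rfl,
      show (1 : Fin 3) = Fin.castSucc 1 from rfl] at hmap
    simp only [map_mul, map_sub, map_pow, toPolynomialLastVar_X_last,
      toPolynomialLastVar_X_castSucc, toPolynomialLastVar_rename_castSucc] at hmap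
    have hu : (Polynomial.C (X 0) * Polynomial.C (X 1) -
        toPolynomialLastVar (C f) * Polynomial.X ^ e).coeff 0 =
        (X 0 * X 1 : MvPolynomial (Fin 2) A) := by
      simp [(Nat.one_le_iff_ne_zero.mp he).symm]
    exact hu ▸ Polynomial.mem_span_coeff_zero_of_X_pow_mul_C_mem_span_pair
      (hu ▸ (isRegular_X.mul isRegular_X).left) hmap
  · intro hg
    obtain ⟨h, rfl⟩ := Ideal.mem_span_singleton.mp hg
    have hXYh : X 2 ^ l * rename Fin.castSucc (X 0 * X 1 * h) =
        X 0 * X 1 * X 2 ^ l * rename (Fin.castSucc : Fin 2 → Fin 3) h := by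
      simp only [map_mul, rename_X, Fin.castSucc_zero, Fin.castSucc_one]
      ring
    rw [hXYh]
    exact Ideal.mul_mem_right _ _ (X_zero_mul_X_one_mul_X_two_pow_mem_stmt9I he)

theorem X_two_pow_mul_rename_aeval_sub_mem_stmt9I (P : MvPolynomial (Fin 3) A) :
    X 2 ^ l * rename Fin.castSucc (aeval (Fin.lastCases 0 X) P) - P * X 2 ^ l ∈
      stmt9I A f e l := by
  obtain ⟨h, hh⟩ := Ideal.mem_span_singleton'.mp (rename_castSucc_aeval_sub_mem_span_X_last P)
  rw [show Fin.last 2 = 2 from rfl] at hh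
  have hmem : X 2 ^ (l + 1) * h ∈ stmt9I A f e l :=
    Ideal.mul_mem_right h _ (Ideal.subset_span (by simp))
  convert hmem using 1
  linear_combination -(X 2 ^ l * hh)

end stmt9I

theorem stmt9_general (A : Type*) [CommRing A] (f : A) (e l : ℕ) (he : 1 ≤ e)
    (F : MvPolynomial (Fin 2) A → (MvPolynomial (Fin 3) A ⧸ stmt9I A f e l))
    (hF : ∀ g, F g = Ideal.Quotient.mk (stmt9I A f e l)
      ((X 2 : MvPolynomial (Fin 3) A) ^ l * rename (Fin.castSucc : Fin 2 → Fin 3) g)) :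
    Ideal.Quotient.mk (stmt9I A f e l)
        ((X 0 : MvPolynomial (Fin 3) A) * X 1 * (X 2) ^ l) = 0 ∧
      (∀ g ∈ Ideal.span {(X 0 : MvPolynomial (Fin 2) A) * X 1}, F g = 0) ∧
      (∀ g, F g = 0 → g ∈ Ideal.span {(X 0 : MvPolynomial (Fin 2) A) * X 1}) ∧
      Set.range F =
        ((Ideal.span {Ideal.Quotient.mk (stmt9I A f e l)
            ((X 2 : MvPolynomial (Fin 3) A) ^ l)} :
          Ideal (MvPolynomial (Fin 3) A ⧸ stmt9I A f e l)) : Set _) := by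
  have hker (g) : F g = 0 ↔ g ∈ Ideal.span {X 0 * X 1} := by
    rw [hF, Ideal.Quotient.eq_zero_iff_mem, X_two_pow_mul_rename_mem_stmt9I_iff he]
  refine ⟨Ideal.Quotient.eq_zero_iff_mem.mpr (X_zero_mul_X_one_mul_X_two_pow_mem_stmt9I he),
    fun g => (hker g).mpr, fun g => (hker g).mp, Set.ext fun z => ⟨?_, fun hz => ?_⟩⟩
  · rintro ⟨g, rfl⟩
    rw [hF, map_mul]
    exact Ideal.mul_mem_right _ _ (Ideal.subset_span rfl)
  · obtain ⟨c, rfl⟩ := Ideal.mem_span_singleton'.mp hz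
    obtain ⟨P, rfl⟩ := Ideal.Quotient.mk_surjective c
    refine ⟨aeval (Fin.lastCases 0 X) P, ?_⟩
    rw [hF, ← map_mul, Ideal.Quotient.eq]
    exact X_two_pow_mul_rename_aeval_sub_mem_stmt9I P

/-- In `S = A[X,Y,t]/(XY − f·t^e, t^{l+1})` one has `XY·t^l = 0`, and the map
`A[X,Y] → S`, `g ↦ t^l·g`, kills the ideal `(XY)`, has kernel exactly `(XY)`, and
range the ideal `(t^l)`; i.e. `(t^l)` is a free `A[X,Y]/(XY)`-module of rank one
generated by `t^l`. -/
theorem stmt9 (A : Type*) [CommRing A] (f : A) (e l : ℕ) (he : 1 ≤ e) (hl : 1 ≤ l)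
    (F : MvPolynomial (Fin 2) A → (MvPolynomial (Fin 3) A ⧸ stmt9I A f e l))
    (hF : ∀ g, F g = Ideal.Quotient.mk (stmt9I A f e l)
      ((X 2 : MvPolynomial (Fin 3) A) ^ l * rename (Fin.castSucc : Fin 2 → Fin 3) g)) :
    Ideal.Quotient.mk (stmt9I A f e l)
        ((X 0 : MvPolynomial (Fin 3) A) * X 1 * (X 2) ^ l) = 0 ∧
      (∀ g ∈ Ideal.span {(X 0 : MvPolynomial (Fin 2) A) * X 1}, F g = 0) ∧
      (∀ g, F g = 0 → g ∈ Ideal.span {(X 0 : MvPolynomial (Fin 2) A) * X 1}) ∧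
      Set.range F =
        ((Ideal.span {Ideal.Quotient.mk (stmt9I A f e l)
            ((X 2 : MvPolynomial (Fin 3) A) ^ l)} :
          Ideal (MvPolynomial (Fin 3) A ⧸ stmt9I A f e l)) : Set _) :=
  stmt9_general A f e l he F hF
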